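/- arXiv:1311.1157 — 4 statements merged into one kernel-verified Lean document; each statement's English description precedes it below -/
import Mathlib

section
/- For every a > 0 and real x, π(a² + x²) − a coth(2πa) + a cos(2πx) csch(2πa) > 0; that is, the diagonal reproducing kernel K_a(x,x) = (π(a²+x²) − a coth(2πa) + a cos(2πx) csch(2πa)) / (π(a²+x²)²) is strictly positive. -/
open Real

lemma sinh_lt_mul_cosh (r : ℝ) (hr : 0 < r) : Real.sinh r < r * Real.cosh r := by
  have key : StrictMonoOn (fun y : ℝ => y * Real.cosh y - Real.sinh y) (Set.Ici 0) := by
    apply strictMonoOn_of_deriv_pos (convex_Ici 0)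
    · fun_prop
    · intro y hy
      have hd : HasDerivAt (fun y : ℝ => y * Real.cosh y - Real.sinh y)
          (1 * Real.cosh y + y * Real.sinh y - Real.cosh y) y :=
        ((hasDerivAt_id y).mul (Real.hasDerivAt_cosh y)).sub (Real.hasDerivAt_sinh y)
      rw [hd.deriv]
      have hy' : 0 < y := by simpa using hy
      have := Real.sinh_pos_iff.mpr hy'
      nlinarith
  have h := key (Set.self_mem_Ici) (Set.mem_Ici.mpr hr.le) hr
  simpa using h

theorem kernel_diagonal_pos (a : ℝ) (ha : 0 < a) (x : ℝ) :
    0 < π * (a ^ 2 + x ^ 2) - a * (Real.cosh (2 * π * a) / Real.sinh (2 * π * a))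
        + a * Real.cos (2 * π * x) * (1 / Real.sinh (2 * π * a)) := by
  have hπ := Real.pi_pos
  have hT : 0 < 2 * π * a := by positivity
  have hs : 0 < Real.sinh (2 * π * a) := Real.sinh_pos_iff.mpr hT
  have hr : 0 < π * a := by positivity
  -- key inequality: sinh r < r cosh r at r = π a
  have hkey : Real.sinh (π * a) < (π * a) * Real.cosh (π * a) := sinh_lt_mul_cosh _ hr
  have hcoshr : 0 < Real.cosh (π * a) := Real.cosh_pos _
  have hsinhr : 0 < Real.sinh (π * a) := Real.sinh_pos_iff.mpr hr
  have hdbl_s : Real.sinh (2 * π * a) = 2 * Real.sinh (π * a) * Real.cosh (π * a) := by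
    rw [show (2 : ℝ) * π * a = 2 * (π * a) by ring, Real.sinh_two_mul]
  have hdbl_c : Real.cosh (2 * π * a) = 2 * Real.sinh (π * a) ^ 2 + 1 := by
    rw [show (2 : ℝ) * π * a = 2 * (π * a) by ring, Real.cosh_two_mul, Real.cosh_sq]
    ring
  have hcos : 1 - (2 * π * x) ^ 2 / 2 ≤ Real.cos (2 * π * x) :=
    Real.one_sub_sq_div_two_le_cos
  have hself : 2 * π * a < Real.sinh (2 * π * a) := Real.self_lt_sinh_iff.mpr hT
  rw [div_eq_mul_inv, one_div]
  rw [show π * (a ^ 2 + x ^ 2) - a * (Real.cosh (2 * π * a) * (Real.sinh (2 * π * a))⁻¹)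
        + a * Real.cos (2 * π * x) * (Real.sinh (2 * π * a))⁻¹
      = (π * (a ^ 2 + x ^ 2) * Real.sinh (2 * π * a) - a * Real.cosh (2 * π * a)
        + a * Real.cos (2 * π * x)) * (Real.sinh (2 * π * a))⁻¹ by
        field_simp]
  apply mul_pos _ (inv_pos.mpr hs)
  -- constant part: π a² sinh T - a cosh T + a > 0  from  sinh r < r cosh r
  have hconst : 0 < π * a ^ 2 * Real.sinh (2 * π * a) - a * Real.cosh (2 * π * a) + a := by
    rw [hdbl_s, hdbl_c]
    nlinarith [mul_pos hsinhr hcoshr, mul_lt_mul_of_pos_left hkey (mul_pos ha hsinhr)]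
  -- x part: π x² sinh T + a cos(2πx) ≥ a - π x² (sinh T - T) ≥ ... 
  have hx : 0 ≤ π * x ^ 2 * (Real.sinh (2 * π * a) - 2 * π * a) := by
    have : 0 ≤ Real.sinh (2 * π * a) - 2 * π * a := by linarith
    positivity
  nlinarith [mul_le_mul_of_nonneg_left hcos ha.le, sq_nonneg x]
end

section
/- For every a > 0, the function x ↦ sinh(2πa)/(cosh(2πa) − cos(2πx)) − 1 is periodic with period 1 and has mean value zero over [0,1]. -/
/-!
With `r = exp (-2πa) ∈ (0, 1)` the integrand, as a function of `θ = 2πx`, is the Poisson kernel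
`(1 - r²) / (1 - 2r cos θ + r²)` minus one, that is `2r (cos θ - r) / (1 - 2r cos θ + r²)`.
This is the derivative of `2 arctan (r sin θ / (1 - r cos θ))`, which is smooth on all of `ℝ`
because `1 - r cos θ > 0`, and vanishes at `θ = 0` and `θ = 2π`.
-/

open Real

theorem one_sub_two_mul_mul_cos_add_sq_eq (r θ : ℝ) :
    1 - 2 * r * cos θ + r ^ 2 = (1 - r * cos θ) ^ 2 + (r * sin θ) ^ 2 := by
  linear_combination -r ^ 2 * sin_sq_add_cos_sq θ

theorem one_sub_mul_cos_pos {r : ℝ} (hr : |r| < 1) (θ : ℝ) : 0 < 1 - r * cos θ := by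
  have : |r * cos θ| < 1 := by
    rw [abs_mul]
    exact (mul_le_of_le_one_right (abs_nonneg r) (abs_cos_le_one θ)).trans_lt hr
  linarith [le_abs_self (r * cos θ)]

theorem hasDerivAt_arctan_mul_sin_div_one_sub_mul_cos {r θ : ℝ} (h : 1 - r * cos θ ≠ 0) :
    HasDerivAt (fun t => arctan (r * sin t / (1 - r * cos t)))
      (r * (cos θ - r) / (1 - 2 * r * cos θ + r ^ 2)) θ := by
  have hq : HasDerivAt (fun t => r * sin t / (1 - r * cos t)) _ θ :=
    ((hasDerivAt_sin θ).const_mul r).div (((hasDerivAt_cos θ).const_mul r).const_sub 1) h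
  refine hq.arctan.congr_deriv ?_
  rw [one_sub_two_mul_mul_cos_add_sq_eq]
  field_simp
  linear_combination -r ^ 2 * sin_sq_add_cos_sq θ

theorem integral_mul_cos_sub_div_eq_zero {r : ℝ} (hr : |r| < 1) :
    ∫ θ in (0 : ℝ)..2 * π, r * (cos θ - r) / (1 - 2 * r * cos θ + r ^ 2) = 0 := by
  have hden : ∀ θ, 1 - 2 * r * cos θ + r ^ 2 ≠ 0 := fun θ => by
    rw [one_sub_two_mul_mul_cos_add_sq_eq]
    have := one_sub_mul_cos_pos hr θ
    positivity
  rw [intervalIntegral.integral_eq_sub_of_hasDerivAt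
    (fun θ _ => hasDerivAt_arctan_mul_sin_div_one_sub_mul_cos (one_sub_mul_cos_pos hr θ).ne')
    ((by fun_prop (disch := exact hden _) : Continuous _).intervalIntegrable _ _)]
  simp

theorem sinh_div_cosh_sub_cos_sub_one {b : ℝ} (hb : b ≠ 0) (θ : ℝ) :
    sinh b / (cosh b - cos θ) - 1 =
      2 * (exp (-b) * (cos θ - exp (-b)) / (1 - 2 * exp (-b) * cos θ + exp (-b) ^ 2)) := by
  have hc : cosh b - cos θ ≠ 0 := by linarith [one_lt_cosh.mpr hb, cos_le_one θ]
  have hcosh : cosh b = ((exp (-b))⁻¹ + exp (-b)) / 2 := by rw [cosh_eq, exp_neg, inv_inv]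
  have hsinh : sinh b = ((exp (-b))⁻¹ - exp (-b)) / 2 := by rw [sinh_eq, exp_neg, inv_inv]
  rw [hcosh] at hc
  rw [hcosh, hsinh]
  set r := exp (-b)
  have hr : r ≠ 0 := (exp_pos _).ne'
  have hd : 1 - 2 * r * cos θ + r ^ 2 ≠ 0 := by
    convert mul_ne_zero (mul_ne_zero two_ne_zero hr) hc using 1
    field_simp
    ring
  rw [div_sub_one hc, ← mul_div_assoc, div_eq_div_iff hc hd]
  field_simp
  ring

theorem periodic_mean_zero (a : ℝ) (ha : 0 < a) :
    Function.Periodic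
        (fun x : ℝ => Real.sinh (2 * π * a) / (Real.cosh (2 * π * a) - Real.cos (2 * π * x)) - 1)
        1
      ∧ ∫ x in (0:ℝ)..1,
          (Real.sinh (2 * π * a) / (Real.cosh (2 * π * a) - Real.cos (2 * π * x)) - 1) = 0 := by
  refine ⟨fun x => by simp only [mul_add, mul_one, cos_add_two_pi], ?_⟩
  have hb : 2 * π * a ≠ 0 := by positivity
  have hr : |exp (-(2 * π * a))| < 1 := by
    rw [abs_of_pos (exp_pos _), exp_lt_one_iff, neg_lt_zero]
    positivity
  rw [intervalIntegral.integral_comp_mul_left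
    (fun θ => sinh (2 * π * a) / (cosh (2 * π * a) - cos θ) - 1) two_pi_pos.ne']
  simp only [sinh_div_cosh_sub_cos_sub_one hb, intervalIntegral.integral_const_mul, mul_zero,
    mul_one, integral_mul_cos_sub_div_eq_zero hr, smul_zero]
end

section
/- Let a > 0, E_a(z) = (2/sinh(2πa))^{1/2} sin(π(z+ia))/(z+ia), E_a*(z) = conj(E_a(conj z)), and W_a(z) = −e^{−2πa}(a+iz)/(a−iz). Then for all complex z where both sides are defined, (E_a(z) + E_a*(z)W_a(z))/(E_a(z) − E_a*(z)W_a(z)) = coth(2πa) − e^{2πiz} csch(2πa). -/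
open Real Complex
open ComplexConjugate

/-!
Since the normalising constant is real, `E_a*(z) = c sin(π(z - ia))/(z - ia)`, and
`W_a(z) = e^{-2πa} (z - ia)/(z + ia)`, so `E_a* W_a` has the same denominator `z + ia` as `E_a`.
After cancelling `c/(z + ia)`, the numerator and denominator become
`sin(w + it) ± e^{-2t} sin(w - it)` with `w = πz`, `t = πa`; expanding in exponentials, these are
`i e^{-(iw + t)}` times `cosh 2t - e^{2iw}` and `sinh 2t` respectively.
-/

theorem sin_add_mul_I_sub_exp_mul_sin_sub_mul_I (w t : ℂ) :
    Complex.sin (w + t * I) - Complex.exp (-(2 * t)) * Complex.sin (w - t * I)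
      = I * Complex.exp (-(w * I + t)) * Complex.sinh (2 * t) := by
  rw [sin_add_mul_I, Complex.sin_sub, Complex.cos_mul_I, Complex.sin_mul_I, Complex.sinh_two_mul,
    Complex.sin, Complex.cos, Complex.sinh, Complex.cosh, neg_add, Complex.exp_add,
    show -(2 * t) = -t + -t by ring, Complex.exp_add, neg_mul, Complex.exp_neg, Complex.exp_neg]
  field_simp
  ring

theorem sin_add_mul_I_add_exp_mul_sin_sub_mul_I (w t : ℂ) :
    Complex.sin (w + t * I) + Complex.exp (-(2 * t)) * Complex.sin (w - t * I)
      = I * Complex.exp (-(w * I + t)) * (Complex.cosh (2 * t) - Complex.exp (2 * w * I)) := by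
  rw [sin_add_mul_I, Complex.sin_sub, Complex.cos_mul_I, Complex.sin_mul_I, Complex.cosh_two_mul,
    Complex.sin, Complex.cos, Complex.sinh, Complex.cosh, neg_add, Complex.exp_add,
    show -(2 * t) = -t + -t by ring, Complex.exp_add, show 2 * w * I = w * I + w * I by ring,
    Complex.exp_add, neg_mul, Complex.exp_neg, Complex.exp_neg]
  field_simp
  ring

theorem sin_add_mul_I_exp_quotient (w t : ℂ) :
    (Complex.sin (w + t * I) + Complex.exp (-(2 * t)) * Complex.sin (w - t * I)) /
        (Complex.sin (w + t * I) - Complex.exp (-(2 * t)) * Complex.sin (w - t * I))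
      = Complex.cosh (2 * t) / Complex.sinh (2 * t)
        - Complex.exp (2 * w * I) * (1 / Complex.sinh (2 * t)) := by
  rw [sin_add_mul_I_add_exp_mul_sin_sub_mul_I, sin_add_mul_I_sub_exp_mul_sin_sub_mul_I,
    mul_div_mul_left _ _ (mul_ne_zero I_ne_zero (Complex.exp_ne_zero _))]
  ring

theorem conj_apply_conj_eq_sin_div {f : ℂ → ℂ} {a c : ℝ}
    (hf : ∀ z : ℂ, z + a * I ≠ 0 → f z = c * Complex.sin (π * (z + a * I)) / (z + a * I))
    {z : ℂ} (hz : z - a * I ≠ 0) :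
    conj (f (conj z)) = c * Complex.sin (π * (z - a * I)) / (z - a * I) := by
  have hz' : conj z + a * I = conj (z - a * I) := by simp
  rw [hf _ (hz'.trans_ne ((map_ne_zero _).mpr hz)), hz']
  simp only [map_div₀, map_mul, Complex.conj_ofReal, ← Complex.sin_conj, Complex.conj_conj]

theorem neg_mul_add_I_mul_div_sub_I_mul (x a z : ℂ) :
    -x * (a + I * z) / (a - I * z) = x * (z - a * I) / (z + a * I) := by
  rw [show a + I * z = I * (z - a * I) by linear_combination a * I_sq,
    show a - I * z = -I * (z + a * I) by linear_combination a * I_sq]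
  field_simp

theorem Ea_Wa_quotient_identity (a : ℝ) (ha : 0 < a)
    (Ea Eas Wa : ℂ → ℂ)
    (hEa : ∀ z : ℂ, z + a * Complex.I ≠ 0 →
      Ea z = (Real.sqrt (2 / Real.sinh (2 * π * a)) : ℂ) *
        Complex.sin (π * (z + a * Complex.I)) / (z + a * Complex.I))
    (hEas : ∀ z : ℂ, Eas z = (starRingEnd ℂ) (Ea ((starRingEnd ℂ) z)))
    (hWa : ∀ z : ℂ, Wa z = -(Real.exp (-(2 * π * a)) : ℂ) * ((a : ℂ) + Complex.I * z)
      / ((a : ℂ) - Complex.I * z)) :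
    ∀ z : ℂ, z ≠ -(a : ℂ) * Complex.I → z ≠ (a : ℂ) * Complex.I →
      Ea z - Eas z * Wa z ≠ 0 →
      (Ea z + Eas z * Wa z) / (Ea z - Eas z * Wa z)
        = Complex.cosh (2 * π * a) / Complex.sinh (2 * π * a)
          - Complex.exp (2 * π * Complex.I * z) * (1 / Complex.sinh (2 * π * a)) := by
  intro z hz₁ hz₂ _
  set c : ℝ := √(2 / Real.sinh (2 * π * a))
  have hc : (c : ℂ) ≠ 0 := ofReal_ne_zero.mpr (Real.sqrt_pos.mpr (by positivity)).ne'
  have hzp : z + a * I ≠ 0 := fun h => hz₁ (by linear_combination h)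
  have hzm : z - a * I ≠ 0 := sub_ne_zero.mpr hz₂
  have hprod : Eas z * Wa z
      = c * (Complex.exp (-(2 * (π * a))) * Complex.sin (π * (z - a * I))) / (z + a * I) := by
    rw [hEas, conj_apply_conj_eq_sin_div hEa hzm, hWa, neg_mul_add_I_mul_div_sub_I_mul]
    push_cast
    field_simp
  -- the common factor `c / (z + a * I)` cancels, leaving the identity at `w = π z`, `t = π a`
  rw [hEa z hzp, hprod, ← add_div, ← sub_div, div_div_div_cancel_right₀ hzp, ← mul_add, ← mul_sub,
    mul_div_mul_left _ _ hc, mul_add, mul_sub, ← mul_assoc, sin_add_mul_I_exp_quotient]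
  ring_nf
end

section
/- Let a > 0 and E_a(z) = (2/sinh(2πa))^{1/2} sin(π(z+ia))/(z+ia). Then for every real x and every y > 0, (y/π) ∫_ℝ (t² + a²)|E_a(t)|² / ((x−t)² + y²) dt = coth(2πa) − e^{−2πy} cos(2πx) csch(2πa). -/
/-!
Since `|sin (π (t + i a))|² = (cosh 2πa - cos 2πt) / 2`, the weight `(t² + a²) |E_a(t)|²` equals
`(cosh 2πa - cos 2πt) / sinh 2πa`, and `(y / π) / ((x - t)² + y²)` is the Cauchy density with
location `x` and scale `y`. The constant part integrates to `coth 2πa`. The cosine part needs the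
characteristic function of the Cauchy distribution, `e^{iξx - y|ξ|}`, which follows by Fourier
inversion from the elementary transform of `e^{-2πy|v|}`, itself a Cauchy density.
-/

open Real Complex MeasureTheory Set FourierTransform ProbabilityTheory NNReal

theorem integrable_cexp_mul_sub_mul_abs {b : ℝ} {c : ℂ} (hc : |c.re| < b) :
    Integrable fun v : ℝ => cexp (c * v - b * |v|) := by
  have hIic : IntegrableOn (fun v : ℝ => cexp ((c + b) * v)) (Iic 0) :=
    integrableOn_exp_mul_complex_Iic (by simp; linarith [neg_abs_le c.re]) 0
  have hIoi : IntegrableOn (fun v : ℝ => cexp ((c - b) * v)) (Ioi 0) :=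
    integrableOn_exp_mul_complex_Ioi (by simp; linarith [le_abs_self c.re]) 0
  rw [← integrableOn_univ, ← Iic_union_Ioi (a := (0 : ℝ))]
  refine (hIic.congr_fun (fun v hv => ?_) measurableSet_Iic).union
    (hIoi.congr_fun (fun v hv => ?_) measurableSet_Ioi)
  · rw [abs_of_nonpos hv]; push_cast; ring_nf
  · rw [abs_of_pos hv]; ring_nf

theorem integral_cexp_mul_sub_mul_abs {b : ℝ} {c : ℂ} (hc : |c.re| < b) :
    ∫ v : ℝ, cexp (c * v - b * |v|) = 2 * b / (b ^ 2 - c ^ 2) := by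
  have hplus : 0 < (c + b).re := by simp; linarith [neg_abs_le c.re]
  have hminus : (c - b).re < 0 := by simp; linarith [le_abs_self c.re]
  have hint := integrable_cexp_mul_sub_mul_abs hc
  rw [← intervalIntegral.integral_Iic_add_Ioi hint.integrableOn hint.integrableOn]
  have hIic : ∫ v in Iic (0 : ℝ), cexp (c * v - b * |v|) = 1 / (c + b) := by
    rw [show 1 / (c + b) = ∫ v in Iic (0 : ℝ), cexp ((c + b) * v) by
      simp [integral_exp_mul_complex_Iic hplus]]
    refine setIntegral_congr_fun measurableSet_Iic (fun v hv => ?_)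
    rw [abs_of_nonpos hv]; push_cast; ring_nf
  have hIoi : ∫ v in Ioi (0 : ℝ), cexp (c * v - b * |v|) = -1 / (c - b) := by
    rw [show -1 / (c - b) = ∫ v in Ioi (0 : ℝ), cexp ((c - b) * v) by
      simp [integral_exp_mul_complex_Ioi hminus]]
    refine setIntegral_congr_fun measurableSet_Ioi (fun v hv => ?_)
    rw [abs_of_pos hv]; ring_nf
  have h1 : c + b ≠ 0 := fun h => by simp [h] at hplus
  have h2 : c - b ≠ 0 := fun h => by simp [h] at hminus
  have h3 : (b : ℂ) ^ 2 - c ^ 2 ≠ 0 := by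
    rw [sq_sub_sq]; exact mul_ne_zero (by rwa [add_comm]) (by rwa [← neg_sub, neg_ne_zero])
  rw [hIic, hIoi]
  field_simp
  ring

theorem fourier_cexp_neg_mul_abs_eq_cauchyPDFReal {γ : ℝ≥0} (hγ : γ ≠ 0) :
    𝓕 (fun v : ℝ => cexp (-(2 * π * γ * |v|))) = fun w => (cauchyPDFReal 0 γ w : ℂ) := by
  ext w
  have hb : |(-2 * π * I * w : ℂ).re| < 2 * π * γ := by
    simpa using (by positivity : (0 : ℝ) < 2 * π * γ)
  rw [Real.fourier_real_eq_integral_exp_smul]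
  calc ∫ v : ℝ, cexp (↑(-2 * π * v * w) * I) • cexp (-(2 * π * γ * |v|))
      = ∫ v : ℝ, cexp ((-2 * π * I * w) * v - ↑(2 * π * γ) * |v|) := by
        congr 1; ext v; rw [smul_eq_mul, ← Complex.exp_add]; push_cast; ring_nf
    _ = _ := by
        have hden : ((2 * π * γ : ℝ) : ℂ) ^ 2 - (-2 * π * I * w) ^ 2
            = ((4 * π ^ 2 * (w ^ 2 + γ ^ 2) : ℝ) : ℂ) := by
          push_cast; linear_combination (-4 * π ^ 2 * w ^ 2) * I_sq
        rw [integral_cexp_mul_sub_mul_abs hb, hden, cauchyPDFReal_def, sub_zero, ← ofReal_ofNat,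
          ← ofReal_mul, ← ofReal_div]
        congr 1
        field_simp
        norm_num

theorem integral_cexp_mul_cauchyPDFReal (x₀ : ℝ) {γ : ℝ≥0} (hγ : γ ≠ 0) (ξ : ℝ) :
    ∫ t : ℝ, cexp (↑(2 * π * ξ * t) * I) * cauchyPDFReal x₀ γ t
      = cexp (↑(2 * π * ξ * x₀) * I) * Real.exp (-(2 * π * γ * |ξ|)) := by
  have hf : Integrable fun v : ℝ => cexp (-(2 * π * γ * |v|)) := by
    simpa using integrable_cexp_mul_sub_mul_abs (b := 2 * π * γ) (c := 0) (by simp; positivity)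
  have hinv := hf.fourierInv_fourier_eq (v := ξ)
    (by rw [fourier_cexp_neg_mul_abs_eq_cauchyPDFReal hγ]
        exact (integrable_cauchyPDFReal 0).ofReal)
    (by fun_prop)
  rw [fourier_cexp_neg_mul_abs_eq_cauchyPDFReal hγ, Real.fourierInv_eq'] at hinv
  simp only [RCLike.inner_apply, conj_trivial] at hinv
  have hshift : ∀ t, cauchyPDFReal x₀ γ t = cauchyPDFReal 0 γ (t - x₀) := by
    simp [cauchyPDFReal_def]
  simp_rw [hshift]
  calc ∫ t : ℝ, cexp (↑(2 * π * ξ * t) * I) * cauchyPDFReal 0 γ (t - x₀)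
      = ∫ s : ℝ, cexp (2 * π * ξ * (s + x₀ : ℝ) * I) * cauchyPDFReal 0 γ s := by
        rw [← integral_sub_right_eq_self
          (fun s : ℝ => cexp (2 * π * ξ * (s + x₀ : ℝ) * I) * (cauchyPDFReal 0 γ s : ℂ)) x₀]
        simp
    _ = cexp (2 * π * ξ * x₀ * I) *
          ∫ s : ℝ, cexp (↑(2 * π * (ξ * s)) * I) • (cauchyPDFReal 0 γ s : ℂ) := by
        rw [← integral_const_mul]; congr 1; ext s
        rw [smul_eq_mul, ← mul_assoc, ← Complex.exp_add]; push_cast; ring_nf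
    _ = _ := by rw [hinv]; push_cast; rfl

theorem integral_cos_mul_cauchyPDFReal (x₀ : ℝ) {γ : ℝ≥0} (hγ : γ ≠ 0) (ξ : ℝ) :
    ∫ t : ℝ, Real.cos (2 * π * ξ * t) * cauchyPDFReal x₀ γ t
      = Real.exp (-(2 * π * γ * |ξ|)) * Real.cos (2 * π * ξ * x₀) := by
  have hint : Integrable fun t : ℝ => cexp (↑(2 * π * ξ * t) * I) * cauchyPDFReal x₀ γ t :=
    (integrable_cauchyPDFReal x₀).ofReal.bdd_mul (c := 1) (by fun_prop)
      (.of_forall fun t => (norm_exp_ofReal_mul_I _).le)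
  have h := congrArg RCLike.re (integral_cexp_mul_cauchyPDFReal x₀ hγ ξ)
  rw [← integral_re hint] at h
  simp only [RCLike.re_to_complex, Complex.re_mul_ofReal, exp_ofReal_mul_I_re] at h
  rw [h, mul_comm]

theorem normSq_sin_add_mul_I (x y : ℝ) :
    normSq (Complex.sin (x + y * I)) = (Real.cosh (2 * y) - Real.cos (2 * x)) / 2 := by
  have h : Complex.sin (x + y * I)
      = ↑(Real.sin x * Real.cosh y) + ↑(Real.cos x * Real.sinh y) * I := by
    rw [sin_add_mul_I]; push_cast; ring
  rw [h, normSq_add_mul_I, Real.cosh_two_mul, Real.cos_two_mul, mul_pow, mul_pow, Real.cosh_sq,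
    Real.sin_sq]
  ring

noncomputable def Ea (a : ℝ) (z : ℂ) : ℂ :=
  (Real.sqrt (2 / Real.sinh (2 * π * a)) : ℂ) * Complex.sin (π * (z + a * I)) / (z + a * I)

theorem sq_add_sq_mul_norm_Ea_sq {a : ℝ} (ha : 0 < a) (t : ℝ) :
    (t ^ 2 + a ^ 2) * ‖Ea a t‖ ^ 2
      = (Real.cosh (2 * π * a) - Real.cos (2 * π * t)) / Real.sinh (2 * π * a) := by
  have hS : 0 < Real.sinh (2 * π * a) := Real.sinh_pos_iff.mpr (by positivity)
  have hz : Complex.normSq (t + a * I) = t ^ 2 + a ^ 2 := normSq_add_mul_I t a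
  have hsin := normSq_sin_add_mul_I (π * t) (π * a)
  rw [Ea, norm_div, norm_mul, div_pow, mul_pow, Complex.sq_norm, Complex.sq_norm, Complex.sq_norm,
    hz, normSq_ofReal, ← sq, sq_sqrt (by positivity), mul_add, ← mul_assoc, ← ofReal_mul,
    ← ofReal_mul, hsin]
  field_simp

theorem Ea_poisson_integral (a : ℝ) (ha : 0 < a) (x : ℝ) (y : ℝ) (hy : 0 < y) :
    (y / π) * ∫ t : ℝ,
        (t ^ 2 + a ^ 2) *
          ‖((Real.sqrt (2 / Real.sinh (2 * π * a)) : ℂ) *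
            Complex.sin (π * ((t : ℂ) + a * Complex.I)) / ((t : ℂ) + a * Complex.I))‖ ^ 2
          / ((x - t) ^ 2 + y ^ 2)
      = Real.cosh (2 * π * a) / Real.sinh (2 * π * a)
          - Real.exp (-(2 * π * y)) * Real.cos (2 * π * x) * (1 / Real.sinh (2 * π * a)) := by
  lift y to ℝ≥0 using hy.le
  have hy₀ : y ≠ 0 := by exact_mod_cast hy.ne'
  have hcos := integral_cos_mul_cauchyPDFReal x hy₀ 1
  simp only [mul_one, abs_one] at hcos
  calc _ = ∫ t : ℝ, (Real.cosh (2 * π * a) * cauchyPDFReal x y t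
              - Real.cos (2 * π * t) * cauchyPDFReal x y t) / Real.sinh (2 * π * a) := by
        rw [← integral_const_mul]
        congr 1; ext t
        have hweight := sq_add_sq_mul_norm_Ea_sq ha t
        unfold Ea at hweight
        rw [mul_div_assoc', hweight, cauchyPDFReal_def, sub_sq_comm t x]
        field_simp
    _ = _ := by
        rw [integral_div, integral_sub, integral_const_mul, integral_cauchyPDFReal_eq_one x hy₀,
          hcos]
        · field_simp
        · exact (integrable_cauchyPDFReal x).const_mul _
        · exact (integrable_cauchyPDFReal x).bdd_mul (c := 1) (by fun_prop)
            (.of_forall fun t => by simpa using Real.abs_cos_le_one _)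
end
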